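/- Let A ∈ ℝ^{n×n}, B ∈ ℝ^{n×m}, K ∈ ℝ^{m×n} be such that A − BK is Hurwitz, and let Q ∈ ℝ^{n×n}, R ∈ ℝ^{m×m} be symmetric positive definite. Let P ∈ ℝ^{n×n} be the symmetric positive semidefinite matrix satisfying (A − BK)ᵀP + P(A − BK) + Q + KᵀRK = 0. Then ‖K‖_F ≤ a₁·Tr(P) + a₂·√(Tr(P)), where a₁ = 2‖B‖/λ_min(R) and a₂ = √(2‖A‖/λ_min(R)). -/

import Mathlib

open Matrix

/-- A square real matrix is Hurwitz if every eigenvalue of it, viewed as a complex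
matrix, has negative real part. -/
def IsHurwitz {n : ℕ} (A : Matrix (Fin n) (Fin n) ℝ) : Prop :=
  ∀ μ ∈ spectrum ℂ (A.map (Complex.ofReal)), μ.re < 0

/-- The spectral (ℓ² operator) norm of a real matrix. -/
noncomputable def spectralNormMat {m n : ℕ} (A : Matrix (Fin m) (Fin n) ℝ) : ℝ :=
  ‖LinearMap.toContinuousLinearMap (Matrix.toEuclideanLin A)‖

/-- The Frobenius norm of a real matrix. -/
noncomputable def frobNorm {m n : ℕ} (A : Matrix (Fin m) (Fin n) ℝ) : ℝ :=
  Real.sqrt (∑ i, ∑ j, A i j ^ 2)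

/-- The smallest eigenvalue of a symmetric real matrix. -/
noncomputable def lamMin {n : ℕ} {A : Matrix (Fin n) (Fin n) ℝ}
    (hA : A.IsHermitian) : ℝ :=
  ⨅ i, hA.eigenvalues i

private lemma euclid_norm_eq {k : ℕ} (v : Fin k → ℝ) :
    ‖(WithLp.equiv 2 (Fin k → ℝ)).symm v‖ = Real.sqrt (∑ i, v i ^ 2) := by
  rw [EuclideanSpace.norm_eq]
  simp [Real.norm_eq_abs, sq_abs]

private lemma mulVec_spec_le {a b : ℕ} (X : Matrix (Fin a) (Fin b) ℝ) (v : Fin b → ℝ) :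
    Real.sqrt (∑ i, (X.mulVec v i) ^ 2) ≤ spectralNormMat X * Real.sqrt (∑ j, v j ^ 2) := by
  have h := (LinearMap.toContinuousLinearMap (Matrix.toEuclideanLin X)).le_opNorm
      ((WithLp.equiv 2 (Fin b → ℝ)).symm v)
  simpa [Matrix.toEuclideanLin_apply_piLp_toLp, euclid_norm_eq, spectralNormMat,
    EuclideanSpace.norm_eq, Real.norm_eq_abs, sq_abs] using h

private lemma mulVec_frob_le {a b : ℕ} (X : Matrix (Fin a) (Fin b) ℝ) (v : Fin b → ℝ) :
    Real.sqrt (∑ i, (X.mulVec v i) ^ 2) ≤ frobNorm X * Real.sqrt (∑ j, v j ^ 2) := by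
  rw [frobNorm, ← Real.sqrt_mul (by positivity)]
  apply Real.sqrt_le_sqrt
  rw [Finset.sum_mul]
  refine Finset.sum_le_sum fun i _ => ?_
  simpa [Matrix.mulVec, dotProduct] using
    Finset.sum_mul_sq_le_sq_mul_sq Finset.univ (fun j => X i j) v

private lemma abs_dot_le {k : ℕ} (u w : Fin k → ℝ) :
    |∑ i, u i * w i| ≤ Real.sqrt (∑ i, u i ^ 2) * Real.sqrt (∑ i, w i ^ 2) := by
  rw [← Real.sqrt_mul (by positivity), ← Real.sqrt_sq_eq_abs]
  exact Real.sqrt_le_sqrt (Finset.sum_mul_sq_le_sq_mul_sq _ _ _)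

private lemma psd_trace_nonneg {k : ℕ} {M : Matrix (Fin k) (Fin k) ℝ} (h : M.PosSemidef) :
    0 ≤ M.trace := by
  refine Finset.sum_nonneg fun i _ => ?_
  exact h.diag_nonneg

private lemma lamMin_le {k : ℕ} [Nonempty (Fin k)] {R : Matrix (Fin k) (Fin k) ℝ}
    (hR : R.IsHermitian) (i : Fin k) : lamMin hR ≤ hR.eigenvalues i :=
  ciInf_le (Set.Finite.bddBelow (Set.finite_range _)) i

private lemma lamMin_pos {k : ℕ} [Nonempty (Fin k)] {R : Matrix (Fin k) (Fin k) ℝ}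
    (hR : R.PosDef) : 0 < lamMin hR.1 := by
  obtain ⟨i0, hi0⟩ := Finite.exists_min hR.1.eigenvalues
  exact lt_of_lt_of_le (hR.eigenvalues_pos i0) (le_ciInf hi0)

private lemma shift_psd {k : ℕ} [Nonempty (Fin k)] {R : Matrix (Fin k) (Fin k) ℝ}
    (hR : R.PosDef) : (R - lamMin hR.1 • (1 : Matrix (Fin k) (Fin k) ℝ)).PosSemidef := by
  set l := lamMin hR.1
  set U : Matrix (Fin k) (Fin k) ℝ := (hR.1.eigenvectorUnitary : Matrix (Fin k) (Fin k) ℝ)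
  have hU : U * star U = 1 := (Matrix.mem_unitaryGroup_iff).mp hR.1.eigenvectorUnitary.2
  have key : R - l • 1 = U * (diagonal (fun i => hR.1.eigenvalues i - l)) * star U := by
    have spec : R = U * diagonal (RCLike.ofReal ∘ hR.1.eigenvalues) * star U := by
      conv_lhs => rw [hR.1.spectral_theorem, Unitary.conjStarAlgAut_apply]
    have h2 : (diagonal (fun i => hR.1.eigenvalues i - l))
        = diagonal (RCLike.ofReal ∘ hR.1.eigenvalues) - l • 1 := by
      simp [RCLike.ofReal_real_eq_id, ← Matrix.diagonal_one, ← Matrix.diagonal_smul,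
        Matrix.diagonal_sub]
    rw [h2, Matrix.mul_sub, Matrix.sub_mul, ← spec]
    congr 1
    simp [Matrix.mul_smul, Matrix.smul_mul, hU]
  rw [key]
  exact (Matrix.posSemidef_diagonal_iff.mpr fun i => sub_nonneg.mpr (lamMin_le hR.1 i)
    ).mul_mul_conjTranspose_same U

noncomputable def Matrix.PosSemidef.sqrt {k : ℕ} {P : Matrix (Fin k) (Fin k) ℝ}
    (hP : P.PosSemidef) : Matrix (Fin k) (Fin k) ℝ :=
  (hP.1.eigenvectorUnitary : Matrix (Fin k) (Fin k) ℝ) *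
    diagonal (fun i => Real.sqrt (hP.1.eigenvalues i)) *
    star (hP.1.eigenvectorUnitary : Matrix (Fin k) (Fin k) ℝ)

lemma Matrix.PosSemidef.posSemidef_sqrt {k : ℕ} {P : Matrix (Fin k) (Fin k) ℝ}
    (hP : P.PosSemidef) : hP.sqrt.PosSemidef :=
  (Matrix.posSemidef_diagonal_iff.mpr fun _ => Real.sqrt_nonneg _).mul_mul_conjTranspose_same _

lemma Matrix.PosSemidef.sqrt_mul_self {k : ℕ} {P : Matrix (Fin k) (Fin k) ℝ}
    (hP : P.PosSemidef) : hP.sqrt * hP.sqrt = P := by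
  unfold Matrix.PosSemidef.sqrt
  set U : Matrix (Fin k) (Fin k) ℝ := (hP.1.eigenvectorUnitary : Matrix (Fin k) (Fin k) ℝ)
  set D := diagonal (fun i => Real.sqrt (hP.1.eigenvalues i))
  have hU : star U * U = 1 := (Matrix.mem_unitaryGroup_iff').mp hP.1.eigenvectorUnitary.2
  have e : U * D * star U * (U * D * star U) = U * (D * (star U * U) * D) * star U := by
    simp only [Matrix.mul_assoc]
  have spec : P = U * diagonal (RCLike.ofReal ∘ hP.1.eigenvalues) * star U := by
    conv_lhs => rw [hP.1.spectral_theorem, Unitary.conjStarAlgAut_apply]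
  rw [e, hU, Matrix.mul_one, diagonal_mul_diagonal]
  conv_rhs => rw [spec]
  congr 2
  ext i j
  simp [diagonal_apply, Real.mul_self_sqrt (hP.eigenvalues_nonneg _)]

private lemma trace_mul_psd_rep {n : ℕ} {P : Matrix (Fin n) (Fin n) ℝ} (hP : P.PosSemidef)
    (M : Matrix (Fin n) (Fin n) ℝ) :
    trace (M * P) = ∑ i, ∑ j, hP.sqrt i j * (M.mulVec (hP.sqrt i)) j := by
  have hsym : ∀ i j, hP.sqrt i j = hP.sqrt j i := by
    intro i j
    have := congrFun (congrFun hP.posSemidef_sqrt.1 j) i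
    simpa [Matrix.conjTranspose_apply] using this
  conv_lhs => rw [← hP.sqrt_mul_self, ← mul_assoc]
  rw [trace_mul_comm]
  simp only [Matrix.trace, Matrix.diag_apply, Matrix.mul_apply, Matrix.mulVec, dotProduct]
  refine Finset.sum_congr rfl fun i _ => Finset.sum_congr rfl fun j _ => ?_
  rw [Finset.mul_sum, Finset.mul_sum]
  refine Finset.sum_congr rfl fun k _ => ?_
  rw [hsym k i]

private lemma trace_psd_rep {n : ℕ} {P : Matrix (Fin n) (Fin n) ℝ} (hP : P.PosSemidef) :
    trace P = ∑ i, ∑ j, (hP.sqrt i j) ^ 2 := by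
  have hsym : ∀ i j, hP.sqrt i j = hP.sqrt j i := by
    intro i j
    have := congrFun (congrFun hP.posSemidef_sqrt.1 j) i
    simpa [Matrix.conjTranspose_apply] using this
  conv_lhs => rw [← hP.sqrt_mul_self]
  simp only [Matrix.trace, Matrix.diag_apply, Matrix.mul_apply]
  refine Finset.sum_congr rfl fun i _ => Finset.sum_congr rfl fun j _ => ?_
  rw [hsym j i]; ring

set_option maxHeartbeats 800000 in
/-- Bound on the feedback gain by the LQR cost: if `A − BK` is Hurwitz,
`Q, R ≻ 0`, and `P ⪰ 0` solves `(A−BK)ᵀP + P(A−BK) + Q + KᵀRK = 0`, then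
`‖K‖_F ≤ a₁·Tr(P) + a₂·√(Tr(P))` with `a₁ = 2‖B‖/λ_min(R)` and `a₂ = √(2‖A‖/λ_min(R))`. -/
theorem gain_bound_by_cost {n m : ℕ}
    (A : Matrix (Fin n) (Fin n) ℝ) (B : Matrix (Fin n) (Fin m) ℝ)
    (K : Matrix (Fin m) (Fin n) ℝ)
    (Q : Matrix (Fin n) (Fin n) ℝ) (R : Matrix (Fin m) (Fin m) ℝ)
    (hHurwitz : IsHurwitz (A - B * K)) (hQ : Q.PosDef) (hR : R.PosDef)
    (P : Matrix (Fin n) (Fin n) ℝ) (hP : P.PosSemidef)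
    (hLyapP : (A - B * K)ᵀ * P + P * (A - B * K) + Q + Kᵀ * R * K = 0) :
    frobNorm K ≤
      (2 * spectralNormMat B / lamMin hR.1) * P.trace +
        Real.sqrt (2 * spectralNormMat A / lamMin hR.1) * Real.sqrt P.trace := by
  rcases Nat.eq_zero_or_pos m with hm0 | hm
  · subst hm0
    have hK : frobNorm K = 0 := by simp [frobNorm]
    have hl0 : lamMin hR.1 = 0 := Real.iInf_of_isEmpty _
    rw [hK, hl0, div_zero, div_zero, zero_mul, Real.sqrt_zero, zero_mul, add_zero]
  haveI : Nonempty (Fin m) := ⟨⟨0, hm⟩⟩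
  have hl : 0 < lamMin hR.1 := lamMin_pos hR
  set l := lamMin hR.1 with hldef
  have hf0 : 0 ≤ frobNorm K := Real.sqrt_nonneg _
  have ht0 : 0 ≤ P.trace := psd_trace_nonneg hP
  have hnB : 0 ≤ spectralNormMat B := norm_nonneg _
  have hnA : 0 ≤ spectralNormMat A := norm_nonneg _
  have htP : P.trace = ∑ i, ∑ j, (hP.sqrt i j) ^ 2 := trace_psd_rep hP
  -- bound for trace (A * P)
  have hA_bd : -(spectralNormMat A * P.trace) ≤ trace (A * P) := by
    rw [trace_mul_psd_rep hP, htP, Finset.mul_sum, ← Finset.sum_neg_distrib]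
    refine Finset.sum_le_sum fun i _ => ?_
    have h1 := abs_dot_le (hP.sqrt i) (A.mulVec (hP.sqrt i))
    have h2 := mulVec_spec_le A (hP.sqrt i)
    have h3 : Real.sqrt (∑ j, (hP.sqrt i j) ^ 2) * Real.sqrt (∑ j, (hP.sqrt i j) ^ 2)
        = ∑ j, (hP.sqrt i j) ^ 2 := Real.mul_self_sqrt (by positivity)
    have h4 := neg_abs_le (∑ j, hP.sqrt i j * (A.mulVec (hP.sqrt i)) j)
    have h5 := mul_le_mul_of_nonneg_left h2 (Real.sqrt_nonneg (∑ j, (hP.sqrt i j) ^ 2))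
    nlinarith [Real.sqrt_nonneg (∑ j, (hP.sqrt i j) ^ 2), hnA]
  -- bound for trace ((B*K) * P)
  have hBK_bd : trace ((B * K) * P) ≤ spectralNormMat B * frobNorm K * P.trace := by
    rw [trace_mul_psd_rep hP, htP, Finset.mul_sum]
    simp only [← Matrix.mulVec_mulVec]
    refine Finset.sum_le_sum fun i _ => ?_
    have h1 := abs_dot_le (hP.sqrt i) (B.mulVec (K.mulVec (hP.sqrt i)))
    have h2 := mulVec_spec_le B (K.mulVec (hP.sqrt i))
    have h5 := mulVec_frob_le K (hP.sqrt i)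
    have h3 : Real.sqrt (∑ j, (hP.sqrt i j) ^ 2) * Real.sqrt (∑ j, (hP.sqrt i j) ^ 2)
        = ∑ j, (hP.sqrt i j) ^ 2 := Real.mul_self_sqrt (by positivity)
    calc ∑ j, hP.sqrt i j * (B.mulVec (K.mulVec (hP.sqrt i))) j
        ≤ |∑ j, hP.sqrt i j * (B.mulVec (K.mulVec (hP.sqrt i))) j| := le_abs_self _
      _ ≤ Real.sqrt (∑ j, (hP.sqrt i j) ^ 2)
          * Real.sqrt (∑ j, ((B.mulVec (K.mulVec (hP.sqrt i))) j) ^ 2) := h1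
      _ ≤ Real.sqrt (∑ j, (hP.sqrt i j) ^ 2)
          * (spectralNormMat B * (frobNorm K * Real.sqrt (∑ j, (hP.sqrt i j) ^ 2))) := by
          refine mul_le_mul_of_nonneg_left ?_ (Real.sqrt_nonneg _)
          exact le_trans h2 (mul_le_mul_of_nonneg_left h5 hnB)
      _ = spectralNormMat B * frobNorm K
          * (Real.sqrt (∑ j, (hP.sqrt i j) ^ 2) * Real.sqrt (∑ j, (hP.sqrt i j) ^ 2)) := by
          ring
      _ = spectralNormMat B * frobNorm K * ∑ j, (hP.sqrt i j) ^ 2 := by rw [h3]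
  -- trace of Q nonneg
  have hQtr : 0 ≤ trace Q := psd_trace_nonneg hQ.posSemidef
  have hPsymm : Pᵀ = P := by
    ext i j
    have := congrFun (congrFun hP.1 i) j
    simpa [Matrix.conjTranspose_apply] using this
  have htrace := congrArg Matrix.trace hLyapP
  rw [trace_add, trace_add, trace_add, trace_zero] at htrace
  have ht1 : trace ((A - B * K)ᵀ * P) = trace ((A - B * K) * P) := by
    calc trace ((A - B * K)ᵀ * P) = trace (((A - B * K)ᵀ * P)ᵀ) := (trace_transpose _).symm
    _ = trace (Pᵀ * (A - B * K)) := by rw [Matrix.transpose_mul, Matrix.transpose_transpose]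
    _ = trace (P * (A - B * K)) := by rw [hPsymm]
    _ = trace ((A - B * K) * P) := trace_mul_comm _ _
  have ht2 : trace (P * (A - B * K)) = trace ((A - B * K) * P) := trace_mul_comm _ _
  have ht3 : trace ((A - B * K) * P) = trace (A * P) - trace ((B * K) * P) := by
    rw [Matrix.sub_mul, trace_sub]
  rw [ht1, ht2, ht3] at htrace
  -- lower bound on trace (Kᵀ * R * K)
  have psd2 : (Kᵀ * (R - l • 1) * K).PosSemidef :=
    (shift_psd hR).conjTranspose_mul_mul_same K
  have htr2 : 0 ≤ trace (Kᵀ * (R - l • 1) * K) := psd_trace_nonneg psd2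
  have hexp : Kᵀ * (R - l • 1) * K = Kᵀ * R * K - l • (Kᵀ * K) := by
    rw [Matrix.mul_sub, Matrix.sub_mul, Matrix.mul_smul, Matrix.mul_one, Matrix.smul_mul]
  rw [hexp, trace_sub, trace_smul, smul_eq_mul, sub_nonneg] at htr2
  have htrKK : trace (Kᵀ * K) = frobNorm K ^ 2 := by
    have hfs : frobNorm K ^ 2 = ∑ i, ∑ j, K i j ^ 2 := Real.sq_sqrt (by positivity)
    rw [hfs]
    simp only [Matrix.trace, Matrix.diag_apply, Matrix.mul_apply, Matrix.transpose_apply]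
    rw [Finset.sum_comm]
    exact Finset.sum_congr rfl fun i _ => Finset.sum_congr rfl fun j _ => (sq (K i j)).symm
  rw [htrKK] at htr2
  -- key inequality
  have hkey : l * frobNorm K ^ 2 ≤
      2 * spectralNormMat A * P.trace + 2 * spectralNormMat B * frobNorm K * P.trace := by
    linarith [htr2, htrace, hA_bd, hBK_bd, hQtr]
  -- final algebra
  clear_value l
  obtain ⟨F, hF⟩ : ∃ x, frobNorm K = x := ⟨_, rfl⟩
  obtain ⟨sA, hsA⟩ : ∃ x, spectralNormMat A = x := ⟨_, rfl⟩
  obtain ⟨sB, hsB⟩ : ∃ x, spectralNormMat B = x := ⟨_, rfl⟩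
  obtain ⟨t, ht⟩ : ∃ x, P.trace = x := ⟨_, rfl⟩
  simp only [hF, hsA, hsB, ht] at hkey hf0 hnA hnB ht0 ⊢
  clear hHurwitz hLyapP htrace psd2 hexp htr2 hA_bd hBK_bd htP htrKK ht1 ht2 ht3
  clear hPsymm hQtr hldef hF hsA hsB ht hm this hP hQ hR A B K Q R P
  have hcnn : 0 ≤ 2 * sA / l * t := mul_nonneg (div_nonneg (by linarith) hl.le) ht0
  have hcs : Real.sqrt (2 * sA / l) * Real.sqrt t = Real.sqrt (2 * sA / l * t) :=
    (Real.sqrt_mul (div_nonneg (by linarith) hl.le) t).symm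
  rw [hcs]
  set c := 2 * sA / l * t with hcdef
  set b := 2 * sB / l * t with hbdef
  clear_value c
  clear_value b
  have hb0 : 0 ≤ b := by
    rw [hbdef]
    exact mul_nonneg (div_nonneg (by linarith) hl.le) ht0
  have hlb : l * b = 2 * sB * t := by
    rw [hbdef, div_mul_eq_mul_div, ← mul_div_assoc, mul_div_cancel_left₀ _ hl.ne']
  have hlc : l * c = 2 * sA * t := by
    rw [hcdef, div_mul_eq_mul_div, ← mul_div_assoc, mul_div_cancel_left₀ _ hl.ne']
  have h2 : F ^ 2 ≤ c + b * F := by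
    nlinarith [hkey, hlb, hlc, hl]
  by_contra hcon
  push_neg at hcon
  have hsq : Real.sqrt c ^ 2 = c := Real.sq_sqrt hcnn
  nlinarith [Real.sqrt_nonneg c, hcon, h2, hb0, hf0,
    mul_nonneg hb0 (Real.sqrt_nonneg c), hcnn, Real.sq_sqrt hcnn]
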